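/- arXiv:2309.08406 — 3 statements merged into one kernel-verified Lean document; each statement's English description precedes it below -/
import Mathlib

section
/- Let x_1, ..., x_n be real numbers with Σ x_i = 0, let t > 0 and ε ≥ 0, and define σ(y) = 1/(1 + exp(-(y-ε)/t)). Then the product Π_{i=1}^n σ(x_i) ≤ α^n, where α = 1/(1 + exp(ε/t)) is the value of σ at 0. -/
theorem stmt9 (n : ℕ) (x : Fin n → ℝ) (hx : ∑ i, x i = 0)
    (t ε : ℝ) (ht : t > 0) (hε : ε ≥ 0) :
    ∏ i, (1 / (1 + Real.exp (-(x i - ε) / t))) ≤ (1 / (1 + Real.exp (ε / t))) ^ n := by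
  rcases Nat.eq_zero_or_pos n with hn | hn
  · subst hn; simp
  set c : ℝ := ε / t with hc
  set u : Fin n → ℝ := fun i => -(x i - ε) / t with hu
  have hsum : ∑ i, u i = n * c := by
    simp only [hu, neg_sub, sub_div, ← Finset.sum_div, Finset.sum_sub_distrib, hx,
      Finset.sum_const, Finset.card_univ, Fintype.card_fin, nsmul_eq_mul]
    ring
  set P : ℝ := ∏ i, (1 + Real.exp (u i)) with hP
  have hpos : ∀ i : Fin n, (0:ℝ) < 1 + Real.exp (u i) := fun i => by positivity
  have hPpos : 0 < P := Finset.prod_pos fun i _ => hpos i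
  have hw : ∀ i ∈ Finset.univ (α := Fin n), (0:ℝ) ≤ 1 / n := fun _ _ => by positivity
  have hw' : ∑ _i : Fin n, (1:ℝ) / n = 1 := by
    rw [Finset.sum_const, Finset.card_univ, Fintype.card_fin, nsmul_eq_mul]
    field_simp
  have hA := Real.geom_mean_le_arith_mean_weighted Finset.univ (fun _ => (1:ℝ)/n)
    (fun i => 1 / (1 + Real.exp (u i))) hw hw' (fun i _ => by positivity)
  have hB := Real.geom_mean_le_arith_mean_weighted Finset.univ (fun _ => (1:ℝ)/n)
    (fun i => Real.exp (u i) / (1 + Real.exp (u i))) hw hw' (fun i _ => by positivity)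
  -- rewrite geometric means as rpow of products
  have hprodA : ∏ i, (1 / (1 + Real.exp (u i))) ^ ((1:ℝ)/n)
      = (1 / P) ^ ((1:ℝ)/n) := by
    rw [Real.finset_prod_rpow _ _ (fun i _ => by positivity) _]
    congr 1
    rw [hP, Finset.prod_div_distrib, Finset.prod_const_one]
  have hprodB : ∏ i, (Real.exp (u i) / (1 + Real.exp (u i))) ^ ((1:ℝ)/n)
      = Real.exp c * (1 / P) ^ ((1:ℝ)/n) := by
    rw [Real.finset_prod_rpow _ _ (fun i _ => by positivity) _]
    rw [Finset.prod_div_distrib, ← Real.exp_sum, hsum, div_eq_mul_one_div,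
      Real.mul_rpow (Real.exp_nonneg _) (by positivity), ← Real.exp_mul]
    congr 2
    field_simp
  have hsumAB : (∑ _i : Fin n, (1:ℝ)/n * (1 / (1 + Real.exp (u _i))))
      + (∑ _i : Fin n, (1:ℝ)/n * (Real.exp (u _i) / (1 + Real.exp (u _i)))) = 1 := by
    rw [← Finset.sum_add_distrib]
    have : ∀ i : Fin n, (1:ℝ)/n * (1 / (1 + Real.exp (u i)))
        + (1:ℝ)/n * (Real.exp (u i) / (1 + Real.exp (u i))) = 1/n := by
      intro i
      have := (hpos i).ne'
      field_simp
    simp_rw [this]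
    exact hw'
  rw [hprodA] at hA
  rw [hprodB] at hB
  have hkey : (1 + Real.exp c) * (1 / P) ^ ((1:ℝ)/n) ≤ 1 := by
    calc (1 + Real.exp c) * (1 / P) ^ ((1:ℝ)/n)
        = (1 / P) ^ ((1:ℝ)/n) + Real.exp c * (1 / P) ^ ((1:ℝ)/n) := by ring
      _ ≤ _ + _ := add_le_add hA hB
      _ = 1 := hsumAB
  have hQpos : (0:ℝ) < (1 / P) ^ ((1:ℝ)/n) := Real.rpow_pos_of_pos (by positivity) _
  have h1 : 1 + Real.exp c ≤ ((1 / P) ^ ((1:ℝ)/n))⁻¹ := by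
    rw [← one_div, le_div_iff₀ hQpos]; linarith [hkey]
  have h2 : ((1 / P) ^ ((1:ℝ)/n))⁻¹ = P ^ ((1:ℝ)/n) := by
    rw [one_div, Real.inv_rpow hPpos.le, inv_inv]
  have h3 : (1 + Real.exp c) ^ n ≤ P := by
    have hb : (0:ℝ) < 1 + Real.exp c := by positivity
    have := pow_le_pow_left₀ (by positivity) (h1.trans_eq h2) n
    rwa [← Real.rpow_natCast (P ^ ((1:ℝ)/n)) n, ← Real.rpow_mul hPpos.le,
      one_div, inv_mul_cancel₀ (by exact_mod_cast hn.ne' : (n:ℝ) ≠ 0), Real.rpow_one] at this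
  calc ∏ i, (1 / (1 + Real.exp (-(x i - ε) / t)))
      = 1 / P := by
        rw [Finset.prod_div_distrib, Finset.prod_const_one]
    _ ≤ 1 / (1 + Real.exp c) ^ n := by
        apply one_div_le_one_div_of_le (by positivity) h3
    _ = (1 / (1 + Real.exp (ε / t))) ^ n := by rw [one_div_pow, hc]
end

section
/- Let P ∈ R^{d×d} be a matrix with 0 ≤ P_{uv} ≤ α for all u, v, where α ≥ 0. Then trace(exp(P)) - d ≤ exp(d·α) - 1, where exp(P) = Σ_{k≥0} P^k / k! is the matrix exponential. -/
open NormedSpace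

section Aux

attribute [local instance] Matrix.linftyOpNormedRing Matrix.linftyOpNormedAlgebra
  Matrix.linftyOpNormedAddCommGroup

theorem stmt12_aux (d : ℕ) (P : Matrix (Fin d) (Fin d) ℝ) (α : ℝ) (hα : 0 ≤ α)
    (hP : ∀ u v, 0 ≤ P u v ∧ P u v ≤ α) :
    (NormedSpace.exp P).trace - d ≤ Real.exp (d * α) - 1 := by
  -- entrywise nonnegativity of powers
  have hnonneg : ∀ k : ℕ, ∀ u v, 0 ≤ (P ^ k) u v := by
    intro k
    induction k with
    | zero => intro u v; simp [Matrix.one_apply]; positivity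
    | succ k ih =>
      intro u v
      rw [pow_succ, Matrix.mul_apply]
      exact Finset.sum_nonneg fun w _ => mul_nonneg (ih u w) (hP w v).1
  -- entrywise upper bound on powers
  have hbound : ∀ k : ℕ, ∀ u v, (P ^ (k+1)) u v ≤ (d : ℝ) ^ k * α ^ (k+1) := by
    intro k
    induction k with
    | zero => intro u v; simpa using (hP u v).2
    | succ k ih =>
      intro u v
      rw [pow_succ, Matrix.mul_apply]
      calc ∑ w, (P ^ (k+1)) u w * P w v
          ≤ ∑ _w : Fin d, ((d : ℝ) ^ k * α ^ (k+1)) * α := by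
            apply Finset.sum_le_sum
            intro w _
            exact mul_le_mul (ih u w) (hP w v).2 (hP w v).1
              (by positivity)
        _ = (d : ℝ) ^ (k+1) * α ^ (k+2) := by
            simp [Finset.sum_const]; ring
  have htr : ∀ k : ℕ, (P ^ (k+1)).trace ≤ ((d : ℝ) * α) ^ (k+1) := by
    intro k
    calc (P ^ (k+1)).trace = ∑ u, (P ^ (k+1)) u u := rfl
      _ ≤ ∑ _u : Fin d, (d : ℝ) ^ k * α ^ (k+1) :=
          Finset.sum_le_sum fun u _ => hbound k u u
      _ = (d : ℝ) ^ (k+1) * α ^ (k+1) := by simp [Finset.sum_const]; ring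
      _ = ((d : ℝ) * α) ^ (k+1) := (mul_pow _ _ _).symm
  -- trace of exp as a tsum
  have hs := expSeries_summable' (𝕂 := ℝ) P
  have hmap : Summable fun n : ℕ => ((Nat.factorial n : ℝ))⁻¹ • (P ^ n).trace := by
    have := hs.map (Matrix.traceLinearMap (Fin d) ℝ ℝ).toContinuousLinearMap
      (Matrix.traceLinearMap (Fin d) ℝ ℝ).toContinuousLinearMap.continuous
    exact this.congr fun n => by simp [Function.comp]
  have htrace_eq : (exp P).trace
      = ∑' n : ℕ, ((Nat.factorial n : ℝ))⁻¹ • (P ^ n).trace := by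
    rw [exp_eq_tsum ℝ]
    have := (Matrix.traceLinearMap (Fin d) ℝ ℝ).toContinuousLinearMap.map_tsum hs
    simpa using this
  have hsr : Summable fun n : ℕ => ((Nat.factorial n : ℝ))⁻¹ • ((d : ℝ) * α) ^ n :=
    expSeries_summable' (𝕂 := ℝ) ((d : ℝ) * α)
  have hexp_eq : Real.exp ((d : ℝ) * α)
      = ∑' n : ℕ, ((Nat.factorial n : ℝ))⁻¹ • ((d : ℝ) * α) ^ n := by
    rw [Real.exp_eq_exp_ℝ, exp_eq_tsum ℝ]
  -- split head term
  rw [htrace_eq, hexp_eq, hmap.tsum_eq_zero_add, hsr.tsum_eq_zero_add]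
  simp only [pow_zero, Nat.factorial_zero, Nat.cast_one, inv_one, one_smul, Matrix.trace_one]
  rw [Fintype.card_fin]
  have hle : ∑' (b : ℕ), ((Nat.factorial (b+1) : ℝ))⁻¹ • (P ^ (b + 1)).trace
      ≤ ∑' (b : ℕ), ((Nat.factorial (b+1) : ℝ))⁻¹ • ((d : ℝ) * α) ^ (b + 1) := by
    apply Summable.tsum_le_tsum _ (hmap.comp_injective Nat.succ_injective)
      (hsr.comp_injective Nat.succ_injective)
    intro b
    have h1 : (0:ℝ) ≤ ((Nat.factorial (b+1) : ℝ))⁻¹ := by positivity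
    simpa [smul_eq_mul] using mul_le_mul_of_nonneg_left (htr b) h1
  linarith

end Aux

theorem stmt12 (d : ℕ) (P : Matrix (Fin d) (Fin d) ℝ) (α : ℝ) (hα : 0 ≤ α)
    (hP : ∀ u v, 0 ≤ P u v ∧ P u v ≤ α) :
    (NormedSpace.exp P).trace - d ≤ Real.exp (d * α) - 1 :=
  stmt12_aux d P α hα hP
end

section
/- Let p ∈ R^d, ε > 0, t > 0, and define the smooth orientation matrix S by S_{uv} = 1/(1 + exp(-(p_v - p_u - ε)/t)). Then every diagonal entry of S^k (k ≥ 1) satisfies (S^k)_{uu} ≤ d^{k-1}·α^k where α = 1/(1 + exp(ε/t)). -/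
open Real Finset

/-- Key pointwise inequality: the sigmoid is bounded by an exponential tangent line
(in log space), proved via two-point weighted AM-GM. -/
lemma sigmoid_tangent_bound (z c : ℝ) :
    1 / (1 + Real.exp (-(z - c))) ≤
      1 / (1 + Real.exp c) * Real.exp (Real.exp c / (1 + Real.exp c) * z) := by
  set E := Real.exp c with hE
  have hEpos : 0 < E := Real.exp_pos c
  have h1E : (0:ℝ) < 1 + E := by linarith
  set β : ℝ := E / (1 + E) with hβ
  have hβ0 : 0 ≤ β := by positivity
  have hw1 : (0:ℝ) ≤ 1 / (1 + E) := by positivity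
  have hwsum : 1 / (1 + E) + β = 1 := by
    rw [hβ]; field_simp
  -- weighted AM-GM with p₁ = 1+E, p₂ = (1+E) * exp (-z)
  have hgm := Real.geom_mean_le_arith_mean2_weighted hw1 hβ0
    (le_of_lt h1E) (by positivity : (0:ℝ) ≤ (1 + E) * Real.exp (-z)) hwsum
  -- simplify the geometric mean
  have hpow : (1 + E) ^ (1 / (1 + E)) * ((1 + E) * Real.exp (-z)) ^ β
      = (1 + E) * Real.exp (-(β * z)) := by
    rw [Real.mul_rpow (le_of_lt h1E) (le_of_lt (Real.exp_pos _)),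
      ← mul_assoc, ← Real.rpow_add h1E, hwsum, Real.rpow_one,
      ← Real.exp_mul]
    ring_nf
  have harith : 1 / (1 + E) * (1 + E) + β * ((1 + E) * Real.exp (-z))
      = 1 + E * Real.exp (-z) := by
    rw [hβ]; field_simp
  rw [hpow, harith] at hgm
  -- now convert to the statement
  have hLHSden : 0 < 1 + Real.exp (-(z - c)) := by positivity
  have hRHS : Real.exp (-(z - c)) = E * Real.exp (-z) := by
    rw [hE, ← Real.exp_add]; ring_nf
  rw [hRHS]
  rw [div_mul_eq_mul_div, div_le_div_iff₀ (by positivity) h1E, one_mul]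
  calc 1 + E = (1 + E) * Real.exp (-(β * z)) * Real.exp (β * z) := by
        rw [mul_assoc, ← Real.exp_add]; simp
    _ ≤ (1 + E * Real.exp (-z)) * Real.exp (β * z) := by
        apply mul_le_mul_of_nonneg_right hgm (le_of_lt (Real.exp_pos _))
    _ = 1 * Real.exp (β * z) * (1 + E * Real.exp (-z)) := by ring

theorem stmt13 (d : ℕ) (p : Fin d → ℝ) (ε t : ℝ) (hε : ε > 0) (ht : t > 0)
    (S : Matrix (Fin d) (Fin d) ℝ)
    (hS : ∀ u v, S u v = 1 / (1 + Real.exp (-(p v - p u - ε) / t)))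
    (k : ℕ) (hk : 1 ≤ k) (u : Fin d) :
    (S ^ k) u u ≤ (d : ℝ) ^ (k - 1) * (1 / (1 + Real.exp (ε / t))) ^ k := by
  set c : ℝ := ε / t with hc
  set α : ℝ := 1 / (1 + Real.exp c) with hα
  have hαpos : 0 < α := by positivity
  set β : ℝ := Real.exp c / (1 + Real.exp c) with hβ
  set A : Fin d → ℝ := fun v => β * (p v / t) with hA
  -- pointwise bounds on S
  have hSnn : ∀ a b, 0 ≤ S a b := by
    intro a b; rw [hS]; positivity
  have hSle : ∀ a b, S a b ≤ α * Real.exp (A b - A a) := by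
    intro a b
    have hz : -(p b - p a - ε) / t = -((p b - p a) / t - c) := by
      rw [hc]; field_simp
    have := sigmoid_tangent_bound ((p b - p a) / t) c
    rw [hS a b, hz]
    refine this.trans_eq ?_
    rw [hα]
    have harg : Real.exp c / (1 + Real.exp c) * ((p b - p a) / t) = A b - A a := by
      simp only [hA, hβ]; ring
    rw [harg]
  -- induction: (S^k) a b ≤ d^(k-1) * α^k * exp (A b - A a)
  have main : ∀ k : ℕ, 1 ≤ k → ∀ a b, (S ^ k) a b ≤
      (d : ℝ) ^ (k - 1) * α ^ k * Real.exp (A b - A a) := by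
    intro k hk
    induction k with
    | zero => omega
    | succ n ih =>
      rcases Nat.eq_or_lt_of_le hk with h1 | h1
      · intro a b
        simp only [← h1, pow_one, Nat.sub_self, pow_zero, one_mul]
        exact hSle a b
      · have hn : 1 ≤ n := by omega
        intro a b
        have hpowk : S ^ (n + 1) = S ^ n * S := pow_succ S n
        rw [hpowk, Matrix.mul_apply]
        have hterm : ∀ w : Fin d, (S ^ n) a w * S w b ≤
            ((d : ℝ) ^ (n - 1) * α ^ n * Real.exp (A w - A a)) *
            (α * Real.exp (A b - A w)) := by
          intro w
          apply mul_le_mul (ih hn a w) (hSle w b) (hSnn w b)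
          positivity
        calc ∑ w, (S ^ n) a w * S w b
            ≤ ∑ w : Fin d, ((d : ℝ) ^ (n - 1) * α ^ n * Real.exp (A w - A a)) *
              (α * Real.exp (A b - A w)) := Finset.sum_le_sum (fun w _ => hterm w)
          _ = ∑ _w : Fin d, (d : ℝ) ^ (n - 1) * α ^ (n + 1) * Real.exp (A b - A a) := by
              apply Finset.sum_congr rfl
              intro w _
              have hexp : Real.exp (A w - A a) * Real.exp (A b - A w)
                  = Real.exp (A b - A a) := by
                rw [← Real.exp_add]; congr 1; ring
              rw [pow_succ, ← hexp]; ring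
          _ = (d : ℝ) ^ (n + 1 - 1) * α ^ (n + 1) * Real.exp (A b - A a) := by
              rw [Finset.sum_const, Finset.card_univ, Fintype.card_fin, nsmul_eq_mul]
              have : (n + 1 - 1 : ℕ) = (n - 1) + 1 := by omega
              rw [this, pow_succ]
              ring
  have := main k hk u u
  simpa using this
end
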